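/- Let K be a field containing F_q, let L be a separable closure of K, and let c_1, …, c_r ∈ K^×. For c ∈ K let g_c : L → L be the F_q-linear map g_c(x) = x^q + c·x, and for 0 ≤ s ≤ r let W_s := ker(g_{c_s} ∘ ⋯ ∘ g_{c_1}) (with W_0 = 0). Then: (a) each W_s is an F_q-subspace of L of dimension s, stable under every field automorphism of L fixing K pointwise; (b) for every 1 ≤ s ≤ r, every field automorphism σ of L fixing K pointwise, every λ ∈ W_s, and every α ∈ L^× with α^{q−1} = −c_s, the scalar σ(α)/α lies in F_q^× and σ(λ) − (σ(α)/α)·λ ∈ W_{s−1}. (That is, the Galois representation on W_r is upper triangular with diagonal given by the Kummer characters of −c_1, …, −c_r.) -/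

import Mathlib

/-!
`g_{c_s} ∘ ⋯ ∘ g_{c_1}` is evaluation of an `F_q`-linear polynomial of degree `q ^ s` whose
derivative is the constant `c_1 ⋯ c_s ≠ 0`; being separable, it has `q ^ s` roots in `L`, so its
kernel `W_s` has `F_q`-dimension `s`. For `λ ∈ W_s` the element
`y = (g_{c_{s-1}} ∘ ⋯ ∘ g_{c_1})(λ)` satisfies `y ^ q = α ^ (q - 1) y`, which forces `y ∈ F_q α`
and hence `σ y = (σ α / α) y`; the same argument applied to `y = α` shows `σ α / α ∈ F_q^×`.
-/

/-- The composite `g_{c_s} ∘ ⋯ ∘ g_{c_1} : L → L`, where `g_c(x) = x^q + c·x`. -/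
def gIter {K L : Type} [Field K] [Field L] [Algebra K L] (q : ℕ) (c : ℕ → K) :
    ℕ → L → L
  | 0 => id
  | s + 1 => (fun x : L => x ^ q + algebraMap K L (c (s + 1)) * x) ∘ gIter q c s

open Polynomial

noncomputable def gIterPoly {K : Type} [Field K] (q : ℕ) (c : ℕ → K) : ℕ → K[X]
  | 0 => X
  | s + 1 => gIterPoly q c s ^ q + C (c (s + 1)) * gIterPoly q c s

section Polynomial

variable {K L : Type} [Field K] [Field L] [Algebra K L] (q : ℕ) (c : ℕ → K)

theorem aeval_gIterPoly (x : L) : ∀ s, aeval x (gIterPoly q c s) = gIter q c s x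
  | 0 => by simp [gIterPoly, gIter]
  | s + 1 => by simp [gIterPoly, gIter, aeval_gIterPoly x s]

theorem natDegree_gIterPoly (hq : 1 < q) : ∀ s, (gIterPoly q c s).natDegree = q ^ s
  | 0 => by simp [gIterPoly]
  | s + 1 => by
      have ih := natDegree_gIterPoly hq s
      have hlt : (C (c (s + 1)) * gIterPoly q c s).natDegree < (gIterPoly q c s ^ q).natDegree :=
        calc (C (c (s + 1)) * gIterPoly q c s).natDegree ≤ q ^ s := ih ▸ natDegree_C_mul_le _ _
          _ < q ^ s * q := lt_mul_right (by positivity) hq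
          _ = (gIterPoly q c s ^ q).natDegree := by rw [natDegree_pow, ih, mul_comm]
      rw [gIterPoly, natDegree_add_eq_left_of_natDegree_lt hlt, natDegree_pow, ih, pow_succ,
        mul_comm]

variable {q}

theorem derivative_gIterPoly (hq : (q : K) = 0) :
    ∀ s, derivative (gIterPoly q c s) = C (∏ i ∈ Finset.range s, c (i + 1))
  | 0 => by simp [gIterPoly]
  | s + 1 => by
      rw [gIterPoly, derivative_add, derivative_pow, derivative_C_mul, derivative_gIterPoly hq s,
        hq, Finset.prod_range_succ]
      simp [mul_comm]

theorem separable_gIterPoly (hq : (q : K) = 0) (s : ℕ) (hc : ∀ i, 1 ≤ i → i ≤ s → c i ≠ 0) :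
    (gIterPoly q c s).Separable := by
  have hunit : IsUnit (derivative (gIterPoly q c s)) := by
    rw [derivative_gIterPoly c hq, isUnit_C, isUnit_iff_ne_zero, Finset.prod_ne_zero_iff]
    intro i hi
    exact hc (i + 1) (by omega) (by simpa using hi)
  exact isCoprime_one_right.of_isCoprime_of_dvd_right hunit.dvd

end Polynomial

theorem map_gIter {K L F : Type} [Field K] [Field L] [Algebra K L] [FunLike F L L]
    [AlgHomClass F K L L] (q : ℕ) (c : ℕ → K) (σ : F) (x : L) :
    ∀ s, σ (gIter q c s x) = gIter q c s (σ x)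
  | 0 => rfl
  | s + 1 => by
      simp only [gIter, Function.comp_apply, map_add, map_mul, map_pow, AlgHomClass.commutes,
        map_gIter q c σ x s]

section FiniteField

variable (Fq : Type) {K L : Type} [Field Fq] [Fintype Fq] [Field K] [Field L] [Algebra K L]
  [Algebra Fq L]

theorem exists_algebraMap_eq_of_pow_card_eq {z : L} (hz : z ^ Fintype.card Fq = z) :
    ∃ a : Fq, algebraMap Fq L a = z := by
  have hsplit : (X ^ Fintype.card Fq - X : Fq[X]).Splits := by
    simpa [Nat.card_eq_fintype_card] using splits_X_pow_nat_card_sub_X (K := Fq)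
  exact hsplit.mem_range_of_isRoot (FiniteField.X_pow_card_sub_X_ne_zero Fq Fintype.one_lt_card)
    (by simp [hz])

theorem exists_algebraMap_mul_eq_of_pow_card_eq {α y : L} (hα : α ≠ 0)
    (hy : y ^ Fintype.card Fq = α ^ (Fintype.card Fq - 1) * y) :
    ∃ t : Fq, algebraMap Fq L t * α = y := by
  obtain ⟨t, ht⟩ := exists_algebraMap_eq_of_pow_card_eq Fq (z := y / α) (by
    rw [div_pow, hy, ← pow_sub_one_mul Fintype.card_ne_zero α, mul_div_mul_left _ _
      (pow_ne_zero _ hα)])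
  exact ⟨t, by rw [ht, div_mul_cancel₀ _ hα]⟩

def gIterLinearMap (c : ℕ → K) (s : ℕ) : L →ₗ[Fq] L where
  toFun := gIter (Fintype.card Fq) c s
  map_add' x y := by
    induction s with
    | zero => rfl
    | succ s ih =>
      simp only [gIter, Function.comp_apply, ih, ← FiniteField.frobeniusAlgHom_apply Fq, map_add]
      ring
  map_smul' a x := by
    induction s with
    | zero => rfl
    | succ s ih =>
      simp only [gIter, Function.comp_apply, RingHom.id_apply] at ih ⊢
      rw [ih, ← FiniteField.frobeniusAlgHom_apply Fq, map_smul, FiniteField.frobeniusAlgHom_apply,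
        smul_add, mul_smul_comm]

theorem gIterLinearMap_apply (c : ℕ → K) (s : ℕ) (x : L) :
    gIterLinearMap Fq c s x = gIter (Fintype.card Fq) c s x := rfl

theorem finrank_ker_gIterLinearMap [IsSepClosed L] (c : ℕ → K) (s : ℕ)
    (hc : ∀ i, 1 ≤ i → i ≤ s → c i ≠ 0) :
    Module.finrank Fq (LinearMap.ker (gIterLinearMap (L := L) Fq c s)) = s := by
  have hqK : (Fintype.card Fq : K) = 0 := (algebraMap K L).injective <| by
    rw [map_natCast, map_zero, ← map_natCast (algebraMap Fq L), FiniteField.cast_card_eq_zero,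
      map_zero]
  have hsep := separable_gIterPoly c hqK s hc
  set W := LinearMap.ker (gIterLinearMap (L := L) Fq c s)
  have hW : (W : Set L) = (gIterPoly (Fintype.card Fq) c s).rootSet L := by
    ext x
    simp [W, mem_rootSet, hsep.ne_zero, aeval_gIterPoly, gIterLinearMap_apply]
  have : Fintype W := Fintype.ofEquiv _ (Equiv.setCongr hW).symm
  have hcard : Fintype.card Fq ^ Module.finrank Fq W = Fintype.card Fq ^ s := by
    rw [← Module.card_eq_pow_finrank, ← natDegree_gIterPoly _ c Fintype.one_lt_card s,
      ← card_rootSet_eq_natDegree hsep (IsSepClosed.splits_codomain (K := L) _ hsep)]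
    exact Fintype.card_congr (Equiv.setCongr hW)
  exact Nat.pow_right_injective Fintype.one_lt_card hcard

end FiniteField

section Kummer

variable {Fq L F : Type} [Field Fq] [Fintype Fq] [Field L] [Algebra Fq L] [FunLike F L L]

theorem exists_algebraMap_unit_eq_map_div {K : Type} [Field K] [Algebra K L]
    [AlgHomClass F K L L] (σ : F) {α : L} (hα : α ≠ 0) {b : K}
    (hb : α ^ (Fintype.card Fq - 1) = algebraMap K L b) :
    ∃ u : Fqˣ, algebraMap Fq L u = σ α / α := by
  have hσα : (σ α) ^ Fintype.card Fq = α ^ (Fintype.card Fq - 1) * σ α := by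
    rw [← map_pow, ← pow_sub_one_mul Fintype.card_ne_zero, map_mul, hb, AlgHomClass.commutes]
  obtain ⟨t, ht⟩ := exists_algebraMap_mul_eq_of_pow_card_eq Fq hα hσα
  have ht0 : t ≠ 0 := by
    rintro rfl
    exact map_ne_zero σ |>.mpr hα (by simpa using ht.symm)
  exact ⟨Units.mk0 t ht0, eq_div_of_mul_eq hα ht⟩

theorem map_eq_div_mul_of_pow_card_eq (K : Type) [Field K] [Algebra K L] [Algebra Fq K]
    [IsScalarTower Fq K L] [AlgHomClass F K L L] (σ : F) {α y : L} (hα : α ≠ 0)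
    (hy : y ^ Fintype.card Fq = α ^ (Fintype.card Fq - 1) * y) :
    σ y = σ α / α * y := by
  obtain ⟨t, rfl⟩ := exists_algebraMap_mul_eq_of_pow_card_eq Fq hα hy
  rw [map_mul, IsScalarTower.algebraMap_apply Fq K L, AlgHomClass.commutes]
  field_simp

theorem gIter_map_sub_div_mul_eq_zero {K : Type} [Field K] [Algebra K L] [Algebra Fq K]
    [IsScalarTower Fq K L] [AlgHomClass F K L L] (σ : F) (c : ℕ → K) (s : ℕ) {α lam : L}
    (hα : α ≠ 0)
    (hαc : α ^ (Fintype.card Fq - 1) = -algebraMap K L (c (s + 1)))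
    (hlam : gIter (Fintype.card Fq) c (s + 1) lam = 0) :
    gIter (Fintype.card Fq) c s (σ lam - σ α / α * lam) = 0 := by
  obtain ⟨u, hu⟩ :=
    exists_algebraMap_unit_eq_map_div (Fq := Fq) σ hα (hαc.trans (map_neg _ _).symm)
  set y := gIter (Fintype.card Fq) c s lam
  have hy : y ^ Fintype.card Fq = α ^ (Fintype.card Fq - 1) * y := by
    rw [hαc, neg_mul]
    exact eq_neg_of_add_eq_zero_left hlam
  rw [← hu, ← Algebra.smul_def, ← gIterLinearMap_apply Fq, map_sub, map_smul,
    gIterLinearMap_apply, gIterLinearMap_apply, ← map_gIter, Algebra.smul_def, hu,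
    map_eq_div_mul_of_pow_card_eq K σ hα hy, sub_self]

end Kummer

theorem kummer_filtration_upper_triangular_general
    (Fq : Type) [Field Fq] [Fintype Fq]
    (K : Type) [Field K] [Algebra Fq K]
    (L : Type) [Field L] [Algebra Fq L] [Algebra K L] [IsScalarTower Fq K L]
    [IsSepClosure K L]
    (r : ℕ) (c : ℕ → K) (hc : ∀ s : ℕ, 1 ≤ s → s ≤ r → c s ≠ 0) :
    (∀ s : ℕ, s ≤ r →
      (∃ W : Submodule Fq L,
        (W : Set L) = {x : L | gIter (Fintype.card Fq) c s x = 0} ∧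
        Module.finrank Fq W = s) ∧
      (∀ σ : L ≃ₐ[K] L, ∀ x : L,
        gIter (Fintype.card Fq) c s x = 0 → gIter (Fintype.card Fq) c s (σ x) = 0)) ∧
    (∀ s : ℕ, 1 ≤ s → s ≤ r → ∀ σ : L ≃ₐ[K] L, ∀ lam : L,
      gIter (Fintype.card Fq) c s lam = 0 →
      ∀ α : L, α ≠ 0 → α ^ (Fintype.card Fq - 1) = -(algebraMap K L (c s)) →
        (∃ u : Fqˣ, algebraMap Fq L (u : Fq) = σ α / α) ∧
        gIter (Fintype.card Fq) c (s - 1) (σ lam - (σ α / α) * lam) = 0) := by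
  have : IsSepClosed L := IsSepClosure.sep_closed K
  refine ⟨fun s hs => ⟨?_, fun σ x hx => ?_⟩, fun s hs1 _ σ lam hlam α hα hαc => ?_⟩
  · exact ⟨LinearMap.ker (gIterLinearMap Fq c s), rfl,
      finrank_ker_gIterLinearMap Fq c s fun i hi1 his => hc i hi1 (his.trans hs)⟩
  · rw [← map_gIter, hx, map_zero]
  · obtain ⟨s, rfl⟩ := Nat.exists_eq_add_of_le' hs1
    exact ⟨exists_algebraMap_unit_eq_map_div σ hα (hαc.trans (map_neg _ _).symm),
      gIter_map_sub_div_mul_eq_zero σ c s hα hαc hlam⟩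

/-- Let `K ⊇ F_q`, `L` a separable closure of `K`, and
`c_1, …, c_r ∈ K^×`. With `W_s := ker(g_{c_s} ∘ ⋯ ∘ g_{c_1})`:
(a) each `W_s` is an `F_q`-subspace of `L` of dimension `s`, stable under `Gal(L/K)`;
(b) for `1 ≤ s ≤ r`, `σ ∈ Gal(L/K)`, `λ ∈ W_s` and `α ∈ L^×` with `α^{q−1} = −c_s`, the
scalar `σ(α)/α` lies in `F_q^×` and `σ(λ) − (σ(α)/α)·λ ∈ W_{s−1}`. -/
theorem kummer_filtration_upper_triangular
    (p m : ℕ) (hp : p.Prime) (hm : 0 < m)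
    (Fq : Type) [Field Fq] [Fintype Fq] (hq : Fintype.card Fq = p ^ m)
    (K : Type) [Field K] [Algebra Fq K]
    (L : Type) [Field L] [Algebra Fq L] [Algebra K L] [IsScalarTower Fq K L]
    [IsSepClosure K L]
    (r : ℕ) (c : ℕ → K) (hc : ∀ s : ℕ, 1 ≤ s → s ≤ r → c s ≠ 0) :
    (∀ s : ℕ, s ≤ r →
      (∃ W : Submodule Fq L,
        (W : Set L) = {x : L | gIter (Fintype.card Fq) c s x = 0} ∧
        Module.finrank Fq W = s) ∧
      (∀ σ : L ≃ₐ[K] L, ∀ x : L,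
        gIter (Fintype.card Fq) c s x = 0 → gIter (Fintype.card Fq) c s (σ x) = 0)) ∧
    (∀ s : ℕ, 1 ≤ s → s ≤ r → ∀ σ : L ≃ₐ[K] L, ∀ lam : L,
      gIter (Fintype.card Fq) c s lam = 0 →
      ∀ α : L, α ≠ 0 → α ^ (Fintype.card Fq - 1) = -(algebraMap K L (c s)) →
        (∃ u : Fqˣ, algebraMap Fq L (u : Fq) = σ α / α) ∧
        gIter (Fintype.card Fq) c (s - 1) (σ lam - (σ α / α) * lam) = 0) :=
  kummer_filtration_upper_triangular_general Fq K L r c hc
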